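/- arXiv:math/0511137 — 3 statements merged into one kernel-verified Lean document; each statement's English description precedes it below -/
import Mathlib

section
/- Let K and K' be positive definite maps on a nonempty set X and let c > 0. Then K' ≤ cK if and only if K'² ≤ c² K K. -/
open scoped InnerProductSpace ComplexOrder Classical
open Complex

noncomputable section

/-- A kernel `K : X × X → ℂ` is positive definite if every finite quadratic form
`∑ i j, K (x i) (x j) * ξ i * conj (ξ j)` is a nonnegative real number
(expressed via the partial order on `ℂ`). -/
def IsPosDefKernel {X : Type*} (K : X → X → ℂ) : Prop :=
  ∀ (n : ℕ) (x : Fin n → X) (ξ : Fin n → ℂ),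
    0 ≤ ∑ i, ∑ j, K (x i) (x j) * ξ i * (starRingEnd ℂ) (ξ j)

/-- `(H, v)` is a Kolmogorov representation of the kernel `K`: the span of the range of `v`
is dense and inner products of the `v x` reproduce `K`.  Mathlib's inner product is
conjugate-linear in the first variable, while the paper's is conjugate-linear in the second,
so the paper's `⟨v x, v y⟩ = K x y` reads `⟪v y, v x⟫_ℂ = K x y` here. -/
def IsKolmogorovRep {X : Type*} (K : X → X → ℂ) (H : Type*) [NormedAddCommGroup H]
    [InnerProductSpace ℂ H] (v : X → H) : Prop :=
  Dense (↑(Submodule.span ℂ (Set.range v)) : Set H) ∧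
    ∀ x y : X, ⟪v y, v x⟫_ℂ = K x y

/-- `L² ≤ c K K'` in the sense of Dutkay. -/
def KernelSqLE {X : Type*} (L K K' : X → X → ℂ) (c : ℝ) : Prop :=
  ∀ (m n : ℕ) (x : Fin m → X) (y : Fin n → X) (ξ : Fin m → ℂ) (η : Fin n → ℂ),
    ‖∑ i, ∑ j, L (x i) (y j) * ξ i * (starRingEnd ℂ) (η j)‖ ^ 2 ≤
      c * (∑ i, ∑ i', K (x i) (x i') * ξ i * (starRingEnd ℂ) (ξ i')).re *
        (∑ j, ∑ j', K' (y j) (y j') * η j * (starRingEnd ℂ) (η j')).re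

/-- `K' ≤ c K` for kernels, via the partial order on `ℂ`. -/
def KernelLE {X : Type*} (K' K : X → X → ℂ) (c : ℝ) : Prop :=
  ∀ (n : ℕ) (x : Fin n → X) (ξ : Fin n → ℂ),
    ∑ i, ∑ j, K' (x i) (x j) * ξ i * (starRingEnd ℂ) (ξ j) ≤
      (c : ℂ) * ∑ i, ∑ j, K (x i) (x j) * ξ i * (starRingEnd ℂ) (ξ j)

/-- A bounded operator is positive if `⟨S v, v⟩ ≥ 0` for all `v` (paper convention;
in Mathlib's convention this is `0 ≤ ⟪v, S v⟫`). -/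
def IsPositiveOp {H : Type*} [NormedAddCommGroup H] [InnerProductSpace ℂ H]
    (S : H →L[ℂ] H) : Prop :=
  ∀ v : H, 0 ≤ ⟪v, S v⟫_ℂ

/-- A family of vectors is a normalized tight frame. -/
def IsNormalizedTightFrame {H : Type*} [NormedAddCommGroup H] [InnerProductSpace ℂ H]
    {ι : Type*} (v : ι → H) : Prop :=
  ∀ f : H, ∑' i, ‖⟪v i, f⟫_ℂ‖ ^ 2 = ‖f‖ ^ 2

/-- `P` is the orthogonal projection onto the set `S`: idempotent, self-adjoint,
with range `S`. -/
def IsOrthProjectionOnto {H : Type*} [NormedAddCommGroup H] [InnerProductSpace ℂ H]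
    (P : H →L[ℂ] H) (S : Set H) : Prop :=
  (∀ v, P (P v) = P v) ∧ (∀ v w : H, ⟪P v, w⟫_ℂ = ⟪v, P w⟫_ℂ) ∧ Set.range P = S

/-- The two covariance relations for a Gabor-type kernel on `ℤ²`. -/
def GaborCovariant (lam : ℂ) (K : ℤ × ℤ → ℤ × ℤ → ℂ) : Prop :=
  (∀ m n m' n' : ℤ, K (m + 1, n) (m' + 1, n') = K (m, n) (m', n')) ∧
  (∀ m n m' n' : ℤ, K (m, n + 1) (m', n' + 1) = lam ^ (m - m') * K (m, n) (m', n'))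

/-- The vectors `U^m V^n ξ₀` of a Gabor type unitary system. -/
def gaborVec {H : Type*} [NormedAddCommGroup H] [InnerProductSpace ℂ H] [CompleteSpace H]
    (U V : unitary (H →L[ℂ] H)) (ξ₀ : H) (p : ℤ × ℤ) : H :=
  ((U ^ p.1 * V ^ p.2 : unitary (H →L[ℂ] H)) : H →L[ℂ] H) ξ₀

/-- `(H, U, V, ξ₀)` is the Gabor type cyclic system associated to the kernel `K` and the
unimodular scalar `lam` : `U V = lam V U`, the vectors `U^m V^n ξ₀` span a dense subspace,
and their inner products reproduce `K`. -/
def IsGaborSystem {H : Type*} [NormedAddCommGroup H] [InnerProductSpace ℂ H] [CompleteSpace H]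
    (lam : ℂ) (K : ℤ × ℤ → ℤ × ℤ → ℂ) (U V : unitary (H →L[ℂ] H)) (ξ₀ : H) : Prop :=
  ((U : H →L[ℂ] H) * (V : H →L[ℂ] H) = lam • ((V : H →L[ℂ] H) * (U : H →L[ℂ] H))) ∧
  Dense (↑(Submodule.span ℂ (Set.range (gaborVec U V ξ₀))) : Set H) ∧
  ∀ m n m' n' : ℤ,
    ⟪gaborVec U V ξ₀ (m', n'), gaborVec U V ξ₀ (m, n)⟫_ℂ = K (m, n) (m', n')

/-! Positivity makes the matrix `(K (z i) (z j))` of a finite family positive semidefinite, so the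
Cauchy–Schwarz inequality `|K'(ξ, η)|² ≤ K'(ξ, ξ) K'(η, η)` holds for the sesquilinear pairing of
two families; combined with `K' ≤ c K` it gives `K'² ≤ c² K K`. Conversely, pairing a family with
itself in `K'² ≤ c² K K` gives `K'(ξ, ξ)² ≤ (c K(ξ, ξ))²` between nonnegative reals. -/

open Matrix ComplexConjugate

theorem Matrix.posSemidef_of_forall_star_dotProduct_mulVec_nonneg {n : Type*} [Fintype n]
    {A : Matrix n n ℂ} (h : ∀ x, 0 ≤ star x ⬝ᵥ A *ᵥ x) : A.PosSemidef := by
  rw [← isPositive_toEuclideanLin_iff, LinearMap.isPositive_iff_complex]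
  intro x
  obtain ⟨r, hr, hx⟩ := RCLike.nonneg_iff_exists_ofReal.1 (h x.ofLp)
  simp only [EuclideanSpace.inner_eq_star_dotProduct, toLpLin_apply, dotProduct_comm x.ofLp,
    star_dotProduct, ← hx]
  simp [hr]

theorem Matrix.PosSemidef.norm_star_dotProduct_mulVec_sq_le {𝕜 n : Type*} [RCLike 𝕜] [Fintype n]
    {A : Matrix n n 𝕜} (hA : A.PosSemidef) (u v : n → 𝕜) :
    ‖star u ⬝ᵥ A *ᵥ v‖ ^ 2 ≤ RCLike.re (star u ⬝ᵥ A *ᵥ u) * RCLike.re (star v ⬝ᵥ A *ᵥ v) := by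
  let _ := A.toSeminormedAddCommGroup hA
  let _ := A.toInnerProductSpace hA
  have hinner (a b : n → 𝕜) : ⟪a, b⟫_𝕜 = star a ⬝ᵥ A *ᵥ b := dotProduct_comm _ _
  have hcs := inner_mul_inner_self_le (𝕜 := 𝕜) u v
  rwa [norm_inner_symm v u, ← sq, hinner, hinner, hinner] at hcs

theorem Complex.le_ofReal_mul_iff_re_le {z w : ℂ} (hz : 0 ≤ z) (hw : 0 ≤ w) (c : ℝ) :
    z ≤ c * w ↔ z.re ≤ c * w.re := by
  rw [Complex.le_def, Complex.re_ofReal_mul, Complex.im_ofReal_mul,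
    ← (Complex.nonneg_iff.1 hz).2, ← (Complex.nonneg_iff.1 hw).2, mul_zero, and_iff_left rfl]

def kernelForm {X ι κ : Type*} [Fintype ι] [Fintype κ] (K : X → X → ℂ) (x : ι → X) (y : κ → X)
    (ξ : ι → ℂ) (η : κ → ℂ) : ℂ :=
  ∑ i, ∑ j, K (x i) (y j) * ξ i * conj (η j)

theorem star_dotProduct_submatrix_mulVec {X ι : Type*} [Fintype ι] (K : X → X → ℂ) (z : ι → X)
    (u v : ι → ℂ) :
    star u ⬝ᵥ (Matrix.of K).submatrix z z *ᵥ v = kernelForm K z z (star u) (star v) := by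
  simp [kernelForm, dotProduct, mulVec, Finset.mul_sum, mul_assoc, mul_left_comm]

namespace IsPosDefKernel

variable {X : Type*} {K : X → X → ℂ}

theorem kernelForm_nonneg (hK : IsPosDefKernel K) {n : ℕ} (x : Fin n → X) (ξ : Fin n → ℂ) :
    0 ≤ kernelForm K x x ξ ξ :=
  hK n x ξ

theorem re_kernelForm_nonneg (hK : IsPosDefKernel K) {n : ℕ} (x : Fin n → X) (ξ : Fin n → ℂ) :
    0 ≤ (kernelForm K x x ξ ξ).re :=
  (Complex.nonneg_iff.1 (hK.kernelForm_nonneg x ξ)).1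

theorem posSemidef_submatrix (hK : IsPosDefKernel K) {ι : Type*} [Fintype ι] (z : ι → X) :
    ((Matrix.of K).submatrix z z).PosSemidef := by
  have hfin (n : ℕ) (w : Fin n → X) : ((Matrix.of K).submatrix w w).PosSemidef :=
    posSemidef_of_forall_star_dotProduct_mulVec_nonneg fun u => by
      rw [star_dotProduct_submatrix_mulVec]
      exact hK.kernelForm_nonneg w (star u)
  let e := Fintype.equivFin ι
  simpa [Function.comp_def] using (hfin _ (z ∘ e.symm)).submatrix e

theorem norm_kernelForm_sq_le (hK : IsPosDefKernel K) {ι κ : Type*} [Fintype ι] [Fintype κ]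
    (x : ι → X) (y : κ → X) (ξ : ι → ℂ) (η : κ → ℂ) :
    ‖kernelForm K x y ξ η‖ ^ 2 ≤ (kernelForm K x x ξ ξ).re * (kernelForm K y y η η).re := by
  -- join the two families into one indexed by `ι ⊕ κ`
  have hcs := (hK.posSemidef_submatrix (Sum.elim x y)).norm_star_dotProduct_mulVec_sq_le
    (star (Sum.elim ξ 0)) (star (Sum.elim 0 η))
  rw [star_dotProduct_submatrix_mulVec, star_dotProduct_submatrix_mulVec,
    star_dotProduct_submatrix_mulVec] at hcs
  simpa [kernelForm, Fintype.sum_sum_type] using hcs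

theorem kernelLE_iff_forall_re_le {K' : X → X → ℂ} (hK : IsPosDefKernel K)
    (hK' : IsPosDefKernel K') (c : ℝ) :
    KernelLE K' K c ↔ ∀ (n : ℕ) (x : Fin n → X) (ξ : Fin n → ℂ),
      (kernelForm K' x x ξ ξ).re ≤ c * (kernelForm K x x ξ ξ).re :=
  forall₃_congr fun _ x ξ =>
    Complex.le_ofReal_mul_iff_re_le (hK'.kernelForm_nonneg x ξ) (hK.kernelForm_nonneg x ξ) c

end IsPosDefKernel

theorem kernelLE_iff_kernelSqLE_general {X : Type*} (K K' : X → X → ℂ)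
    (hK : IsPosDefKernel K) (hK' : IsPosDefKernel K') (c : ℝ) (hc : 0 < c) :
    KernelLE K' K c ↔ KernelSqLE K' K K (c ^ 2) := by
  rw [hK.kernelLE_iff_forall_re_le hK']
  constructor
  · intro h m n x y ξ η
    calc ‖kernelForm K' x y ξ η‖ ^ 2
        ≤ (kernelForm K' x x ξ ξ).re * (kernelForm K' y y η η).re :=
          hK'.norm_kernelForm_sq_le x y ξ η
      _ ≤ (c * (kernelForm K x x ξ ξ).re) * (c * (kernelForm K y y η η).re) :=
          mul_le_mul (h m x ξ) (h n y η) (hK'.re_kernelForm_nonneg y η)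
            ((hK'.re_kernelForm_nonneg x ξ).trans (h m x ξ))
      _ = c ^ 2 * (kernelForm K x x ξ ξ).re * (kernelForm K y y η η).re := by ring
  · intro h n x ξ
    have hsq : ‖kernelForm K' x x ξ ξ‖ ^ 2 ≤
        c ^ 2 * (kernelForm K x x ξ ξ).re * (kernelForm K x x ξ ξ).re :=
      h n n x x ξ ξ
    rw [← Complex.re_eq_norm.2 (hK'.kernelForm_nonneg x ξ)] at hsq
    exact (pow_le_pow_iff_left₀ (hK'.re_kernelForm_nonneg x ξ)
      (mul_nonneg hc.le (hK.re_kernelForm_nonneg x ξ)) two_ne_zero).1 (hsq.trans_eq (by ring))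

/-- For positive definite kernels `K, K'` and `c > 0`, `K' ≤ c K` iff `K'² ≤ c² K K`. -/
theorem kernelLE_iff_kernelSqLE {X : Type*} [Nonempty X] (K K' : X → X → ℂ)
    (hK : IsPosDefKernel K) (hK' : IsPosDefKernel K') (c : ℝ) (hc : 0 < c) :
    KernelLE K' K c ↔ KernelSqLE K' K K (c ^ 2) :=
  kernelLE_iff_kernelSqLE_general K K' hK hK' c hc
end
end

section
/- Let A be a (unital) C*-algebra, let φ, φ' be positive linear functionals on A with φ'(x) ≤ c φ(x) for all positive x ∈ A and some c > 0, and let (H_φ, π_φ, ξ₀) be a GNS representation of φ. Then there exists a unique positive bounded linear operator S on H_φ commuting with π_φ(x) for every x ∈ A such that ⟨S π_φ(x) ξ₀, π_φ(y) ξ₀⟩ = φ'(y*x) for all x, y ∈ A. Conversely, for any positive bounded operator S in the commutant of π_φ(A), there is a unique positive linear functional φ' on A such that ⟨S π_φ(x) ξ₀, π_φ(y) ξ₀⟩ = φ'(y*x) for all x, y ∈ A, and it satisfies φ'(x) ≤ ‖S‖ φ(x) for all positive x ∈ A. -/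
open scoped InnerProductSpace ComplexOrder Classical
open Complex

noncomputable section

variable {A : Type*} [NormedRing A] [StarRing A] [CStarRing A]
  [NormedAlgebra ℂ A] [StarModule ℂ A] [CompleteSpace A]

/-- `(H, π, ξ₀)` is a GNS representation of the positive linear functional `φ`. -/
def IsGNSRep {H : Type*} [NormedAddCommGroup H] [InnerProductSpace ℂ H] [CompleteSpace H]
    (φ : A →ₗ[ℂ] ℂ) (π : A →⋆ₐ[ℂ] (H →L[ℂ] H)) (ξ₀ : H) : Prop :=
  Dense (↑(Submodule.span ℂ (Set.range fun x : A => π x ξ₀)) : Set H) ∧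
    ∀ x : A, ⟪ξ₀, π x ξ₀⟫_ℂ = φ x

/-! By Cauchy–Schwarz for the positive form `(x, y) ↦ φ' (star x * y)` and `φ' ≤ c φ`,
`‖φ' (star x * y)‖ ≤ c ‖π x ξ₀‖ ‖π y ξ₀‖`, so the form descends through the dense orbit
`x ↦ π x ξ₀` to a bounded sesquilinear form on `H`, which is represented by an operator `S`.
Positivity of `S` and `S π a = π a S` only need checking on the orbit, where they reduce to
positivity of `φ'` and to `star (star a * x) * y = star x * (a * y)`. Conversely the functional is
`x ↦ ⟪ξ₀, S (π x ξ₀)⟫`, and `⟪η, S η⟫ ≤ ‖S‖ ‖η‖² = ‖S‖ φ (star y * y)` for `η = π y ξ₀`. -/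

namespace LinearMap

variable {M : Type*} [AddCommGroup M] [Module ℂ M] {B : M →ₗ⋆[ℂ] M →ₗ[ℂ] ℂ}

theorem IsNonneg.isSymm (hB : B.IsNonneg) : B.IsSymm := by
  have him : ∀ v, (B v v).im = 0 := fun v => (Complex.le_def.mp (hB.nonneg v)).2.symm
  refine ⟨fun x y => ?_⟩
  have h₁ := him (x + y)
  have h₂ := him (x + I • y)
  simp only [map_add, map_smulₛₗ, RingHom.id_apply, add_apply, smul_apply, smul_eq_mul, conj_I,
    add_re, add_im, mul_re, mul_im, neg_re, neg_im, I_re, I_im, him x, him y] at h₁ h₂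
  apply Complex.ext <;> simp only [conj_re, conj_im] <;> linarith

theorem IsNonneg.norm_sq_apply_le (hB : B.IsNonneg) (x y : M) :
    ‖B x y‖ ^ 2 ≤ (B x x).re * (B y y).re := by
  let _ : PreInnerProductSpace.Core ℂ M :=
    { inner := fun x y => B x y
      conj_inner_symm := fun x y => hB.isSymm.eq y x
      re_inner_nonneg := fun x => (Complex.le_def.mp (hB.nonneg x)).1
      add_left := by simp
      smul_left := by simp }
  have h : ‖B x y‖ * ‖B y x‖ ≤ RCLike.re (B x x) * RCLike.re (B y y) :=
    InnerProductSpace.Core.inner_mul_inner_self_le (𝕜 := ℂ) (F := M) x y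
  rwa [← hB.isSymm.eq x y, RCLike.norm_conj, ← sq] at h

end LinearMap

section StarMulForm

variable {R : Type*} [Ring R] [StarRing R] [Algebra ℂ R] [StarModule ℂ R]

def LinearMap.starMulForm (ψ : R →ₗ[ℂ] ℂ) : R →ₗ⋆[ℂ] R →ₗ[ℂ] ℂ :=
  LinearMap.mk₂'ₛₗ (starRingEnd ℂ) (RingHom.id ℂ) (fun y x => ψ (star y * x))
    (fun _ _ _ => by rw [star_add, add_mul, map_add])
    (fun _ _ _ => by rw [star_smul, smul_mul_assoc, map_smul, star_def, smul_eq_mul])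
    (fun _ _ _ => by rw [mul_add, map_add])
    (fun _ _ _ => by rw [mul_smul_comm, map_smul, RingHom.id_apply, smul_eq_mul])

@[simp]
theorem LinearMap.starMulForm_apply (ψ : R →ₗ[ℂ] ℂ) (x y : R) :
    ψ.starMulForm x y = ψ (star x * y) := rfl

theorem LinearMap.isNonneg_starMulForm {ψ : R →ₗ[ℂ] ℂ} (hψ : ∀ x, 0 ≤ ψ (star x * x)) :
    ψ.starMulForm.IsNonneg :=
  ⟨hψ⟩

end StarMulForm

section HilbertSpace

variable {𝕜 E H : Type*} [RCLike 𝕜] [AddCommGroup E] [Module 𝕜 E]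
  [NormedAddCommGroup H] [InnerProductSpace 𝕜 H] {T : E →ₗ[𝕜] H}

theorem DenseRange.continuousLinearMap_ext {F : Type*} [TopologicalSpace F] [AddCommMonoid F]
    [Module 𝕜 F] [T2Space F] (hT : DenseRange T) {f g : H →L[𝕜] F} (h : ∀ x, f (T x) = g (T x)) :
    f = g :=
  ContinuousLinearMap.coeFn_injective <| hT.equalizer f.continuous g.continuous <| funext h

theorem DenseRange.continuousLinearMap_ext_inner (hT : DenseRange T) {S S' : H →L[𝕜] H}
    (h : ∀ x y, ⟪T x, S (T y)⟫_𝕜 = ⟪T x, S' (T y)⟫_𝕜) : S = S' :=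
  hT.continuousLinearMap_ext fun y => hT.eq_of_inner_right 𝕜 (h · y)

theorem DenseRange.exists_continuousLinearMap_inner_eq [CompleteSpace H] (hT : DenseRange T)
    (B : E →ₗ⋆[𝕜] E →ₗ[𝕜] 𝕜) {C : ℝ} (hC : 0 ≤ C)
    (hB : ∀ x y, ‖B x y‖ ≤ C * ‖T x‖ * ‖T y‖) :
    ∃ S : H →L[𝕜] H, ∀ x y, ⟪T x, S (T y)⟫_𝕜 = B x y := by
  have hext (x y : E) : (B x).extendOfNorm T (T y) = B x y :=
    LinearMap.extendOfNorm_eq hT ⟨_, hB x⟩ y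
  let B₁ : E →ₗ⋆[𝕜] StrongDual 𝕜 H :=
    { toFun := fun x => (B x).extendOfNorm T
      map_add' := fun x x' => hT.continuousLinearMap_ext fun y => by
        rw [add_apply, hext, hext, hext, map_add, LinearMap.add_apply]
      map_smul' := fun c x => hT.continuousLinearMap_ext fun y => by
        rw [smul_apply, hext, hext, map_smulₛₗ, LinearMap.smul_apply] }
  have hB₂ (x : E) : ‖B₁ x‖ ≤ C * ‖T x‖ :=
    LinearMap.opNorm_extendOfNorm_le hT (by positivity) (hB x)
  let B₂ : H →L⋆[𝕜] StrongDual 𝕜 H := B₁.extendOfNorm T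
  refine ⟨ContinuousLinearMap.adjoint (InnerProductSpace.continuousLinearMapOfBilin B₂),
    fun x y => ?_⟩
  rw [ContinuousLinearMap.adjoint_inner_right, InnerProductSpace.continuousLinearMapOfBilin_apply,
    LinearMap.extendOfNorm_eq hT ⟨C, hB₂⟩]
  exact hext x y

end HilbertSpace

section PositiveOperator

variable {H : Type*} [NormedAddCommGroup H] [InnerProductSpace ℂ H] {S : H →L[ℂ] H}

theorem IsPositiveOp.of_denseRange {ι : Type*} {f : ι → H} (hf : DenseRange f)
    (h : ∀ i, 0 ≤ ⟪f i, S (f i)⟫_ℂ) : IsPositiveOp S :=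
  fun v => hf.induction_on v (isClosed_le continuous_const (continuous_id.inner S.continuous)) h

theorem IsPositiveOp.inner_le_norm_mul (hS : IsPositiveOp S) (v : H) :
    ⟪v, S v⟫_ℂ ≤ (‖S‖ : ℂ) * (‖v‖ : ℂ) ^ 2 := by
  rw [← ofReal_pow, ← ofReal_mul, Complex.le_def, ofReal_re, ofReal_im]
  refine ⟨?_, (Complex.le_def.mp (hS v)).2.symm⟩
  calc (⟪v, S v⟫_ℂ).re ≤ ‖⟪v, S v⟫_ℂ‖ := re_le_norm _
    _ ≤ ‖v‖ * ‖S v‖ := norm_inner_le_norm _ _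
    _ ≤ ‖v‖ * (‖S‖ * ‖v‖) := by gcongr; exact S.le_opNorm v
    _ = ‖S‖ * ‖v‖ ^ 2 := by ring

end PositiveOperator

section Representation

variable {R H : Type*} [Semiring R] [StarRing R] [Algebra ℂ R]
  [NormedAddCommGroup H] [InnerProductSpace ℂ H] [CompleteSpace H]
  (π : R →⋆ₐ[ℂ] (H →L[ℂ] H))

def orbitMap (ξ₀ : H) : R →ₗ[ℂ] H :=
  (ContinuousLinearMap.apply ℂ H ξ₀).toLinearMap ∘ₗ π.toAlgHom.toLinearMap

@[simp]
theorem orbitMap_apply (ξ₀ : H) (x : R) : orbitMap π ξ₀ x = π x ξ₀ := rfl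

variable {π}

theorem inner_map_star_apply (a : R) (u v : H) : ⟪π (star a) u, v⟫_ℂ = ⟪u, π a v⟫_ℂ := by
  rw [map_star, ContinuousLinearMap.star_eq_adjoint, ContinuousLinearMap.adjoint_inner_left]

theorem inner_commuting_apply_eq {S : H →L[ℂ] H} (hS : ∀ a, S.comp (π a) = (π a).comp S)
    (ξ₀ : H) (x y : R) : ⟪π y ξ₀, S (π x ξ₀)⟫_ℂ = ⟪ξ₀, S (π (star y * x) ξ₀)⟫_ℂ := by
  rw [map_mul, mul_apply_eq_comp, ← ContinuousLinearMap.comp_apply S (π (star y)), hS (star y),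
    ContinuousLinearMap.comp_apply, ← inner_map_star_apply (star y), star_star]

end Representation

section GNS

variable {R H : Type*} [NormedRing R] [StarRing R] [NormedAlgebra ℂ R]
  [NormedAddCommGroup H] [InnerProductSpace ℂ H] [CompleteSpace H]
  {φ : R →ₗ[ℂ] ℂ} {π : R →⋆ₐ[ℂ] (H →L[ℂ] H)} {ξ₀ : H}

theorem IsGNSRep.denseRange (hrep : IsGNSRep φ π ξ₀) : DenseRange (orbitMap π ξ₀) := by
  have h := hrep.1
  rwa [show (Set.range fun x => π x ξ₀) = LinearMap.range (orbitMap π ξ₀) from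
    (LinearMap.coe_range (orbitMap π ξ₀)).symm, Submodule.span_eq] at h

theorem IsGNSRep.inner_apply (hrep : IsGNSRep φ π ξ₀) (x y : R) :
    ⟪π y ξ₀, π x ξ₀⟫_ℂ = φ (star y * x) := by
  rw [← hrep.2, map_mul, mul_apply_eq_comp, ← inner_map_star_apply (star y), star_star]

theorem IsGNSRep.apply_star_mul_self (hrep : IsGNSRep φ π ξ₀) (x : R) :
    φ (star x * x) = (‖π x ξ₀‖ : ℂ) ^ 2 := by
  rw [← hrep.inner_apply]
  exact inner_self_eq_norm_sq_to_K _

theorem IsGNSRep.norm_apply_star_mul_le (hrep : IsGNSRep φ π ξ₀) [StarModule ℂ R] {ψ : R →ₗ[ℂ] ℂ}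
    (hψ : ∀ x, 0 ≤ ψ (star x * x)) {c : ℝ} (hc : 0 ≤ c)
    (hle : ∀ x, ψ (star x * x) ≤ (c : ℂ) * φ (star x * x)) (x y : R) :
    ‖ψ (star x * y)‖ ≤ c * ‖π x ξ₀‖ * ‖π y ξ₀‖ := by
  have hre (z : R) : (ψ (star z * z)).re ≤ c * ‖π z ξ₀‖ ^ 2 := by
    have h := (Complex.le_def.mp (hle z)).1
    rwa [hrep.apply_star_mul_self, ← ofReal_pow, ← ofReal_mul, ofReal_re] at h
  have hnonneg (z : R) : 0 ≤ (ψ (star z * z)).re := (Complex.le_def.mp (hψ z)).1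
  have hcs := (LinearMap.isNonneg_starMulForm hψ).norm_sq_apply_le x y
  rw [LinearMap.starMulForm_apply, LinearMap.starMulForm_apply,
    LinearMap.starMulForm_apply] at hcs
  refine (pow_le_pow_iff_left₀ (norm_nonneg _) (by positivity) two_ne_zero).mp ?_
  calc ‖ψ (star x * y)‖ ^ 2 ≤ (ψ (star x * x)).re * (ψ (star y * y)).re := hcs
    _ ≤ (c * ‖π x ξ₀‖ ^ 2) * (c * ‖π y ξ₀‖ ^ 2) :=
      mul_le_mul (hre x) (hre y) (hnonneg y) (by positivity)
    _ = (c * ‖π x ξ₀‖ * ‖π y ξ₀‖) ^ 2 := by ring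

end GNS

theorem gns_commutant_positive_operators_general (φ φ' : A →ₗ[ℂ] ℂ)
    (hφ' : ∀ x : A, 0 ≤ φ' (star x * x))
    {H : Type*} [NormedAddCommGroup H] [InnerProductSpace ℂ H] [CompleteSpace H]
    (π : A →⋆ₐ[ℂ] (H →L[ℂ] H)) (ξ₀ : H) (hrep : IsGNSRep φ π ξ₀) :
    (∀ c : ℝ, 0 < c → (∀ y : A, φ' (star y * y) ≤ (c : ℂ) * φ (star y * y)) →
      ∃! S : H →L[ℂ] H,
        IsPositiveOp S ∧ (∀ x : A, S.comp (π x) = (π x).comp S) ∧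
          (∀ x y : A, ⟪π y ξ₀, S (π x ξ₀)⟫_ℂ = φ' (star y * x))) ∧
    (∀ S : H →L[ℂ] H, IsPositiveOp S → (∀ x : A, S.comp (π x) = (π x).comp S) →
      (∃! ψ : A →ₗ[ℂ] ℂ, ∀ x y : A, ⟪π y ξ₀, S (π x ξ₀)⟫_ℂ = ψ (star y * x)) ∧
      (∀ ψ : A →ₗ[ℂ] ℂ, (∀ x y : A, ⟪π y ξ₀, S (π x ξ₀)⟫_ℂ = ψ (star y * x)) →
        (∀ x : A, 0 ≤ ψ (star x * x)) ∧
          ∀ y : A, ψ (star y * y) ≤ (‖S‖ : ℂ) * φ (star y * y))) := by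
  have hT := hrep.denseRange
  have hmul (a b : A) : π a (π b ξ₀) = π (a * b) ξ₀ := by
    rw [map_mul, mul_apply_eq_comp]
  refine ⟨fun c hc hle => ?_, fun S hS hcomm => ?_⟩
  · obtain ⟨S, hSφ'⟩ := hT.exists_continuousLinearMap_inner_eq φ'.starMulForm hc.le
      (hrep.norm_apply_star_mul_le hφ' hc.le hle)
    have hS (x y : A) : ⟪π y ξ₀, S (π x ξ₀)⟫_ℂ = φ' (star y * x) := hSφ' y x
    refine ⟨S, ⟨.of_denseRange hT fun x => (hS x x).symm ▸ hφ' x, fun a => ?_, hS⟩, ?_⟩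
    · refine hT.continuousLinearMap_ext_inner fun x y => ?_
      simp only [orbitMap_apply, ContinuousLinearMap.comp_apply]
      rw [hmul, ← inner_map_star_apply, hmul, hS, hS, star_mul, star_star, mul_assoc]
    · rintro S' ⟨-, -, hS'⟩
      refine hT.continuousLinearMap_ext_inner fun x y => ?_
      simp only [orbitMap_apply, hS, hS']
  · refine ⟨⟨(innerSL ℂ ξ₀ ∘L S).toLinearMap ∘ₗ orbitMap π ξ₀, inner_commuting_apply_eq hcomm ξ₀,
      fun ψ hψ => LinearMap.ext fun x => ?_⟩, fun ψ hψ => ⟨fun x => hψ x x ▸ hS _, fun y => ?_⟩⟩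
    · simpa using (hψ x 1).symm
    · rw [← hψ y y, hrep.apply_star_mul_self]
      exact hS.inner_le_norm_mul _

/-- Positive operators in the commutant of a GNS representation of `φ` correspond to
positive functionals dominated by a multiple of `φ`. -/
theorem gns_commutant_positive_operators (φ φ' : A →ₗ[ℂ] ℂ)
    (hφ : ∀ x : A, 0 ≤ φ (star x * x)) (hφ' : ∀ x : A, 0 ≤ φ' (star x * x))
    {H : Type*} [NormedAddCommGroup H] [InnerProductSpace ℂ H] [CompleteSpace H]
    (π : A →⋆ₐ[ℂ] (H →L[ℂ] H)) (ξ₀ : H) (hrep : IsGNSRep φ π ξ₀) :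
    (∀ c : ℝ, 0 < c → (∀ y : A, φ' (star y * y) ≤ (c : ℂ) * φ (star y * y)) →
      ∃! S : H →L[ℂ] H,
        IsPositiveOp S ∧ (∀ x : A, S.comp (π x) = (π x).comp S) ∧
          (∀ x y : A, ⟪π y ξ₀, S (π x ξ₀)⟫_ℂ = φ' (star y * x))) ∧
    (∀ S : H →L[ℂ] H, IsPositiveOp S → (∀ x : A, S.comp (π x) = (π x).comp S) →
      (∃! ψ : A →ₗ[ℂ] ℂ, ∀ x y : A, ⟪π y ξ₀, S (π x ξ₀)⟫_ℂ = ψ (star y * x)) ∧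
      (∀ ψ : A →ₗ[ℂ] ℂ, (∀ x y : A, ⟪π y ξ₀, S (π x ξ₀)⟫_ℂ = ψ (star y * x)) →
        (∀ x : A, 0 ≤ ψ (star x * x)) ∧
          ∀ y : A, ψ (star y * y) ≤ (‖S‖ : ℂ) * φ (star y * y))) :=
  gns_commutant_positive_operators_general φ φ' hφ' π ξ₀ hrep
end
end

section
/- Let λ ∈ ℂ with |λ| = 1, and let K, K' be positive definite maps on ℤ² satisfying K((m+1,n),(m'+1,n')) = K((m,n),(m',n')) and K((m,n+1),(m',n'+1)) = λ^{m-m'} K((m,n),(m',n')) for all m,n,m',n' ∈ ℤ (and likewise for K'). Let (H_K, U_K, V_K, ξ₀) and (H_{K'}, U_{K'}, V_{K'}, ξ₀') be the associated Gabor type cyclic systems. Let L : ℤ² × ℤ² → ℂ with L² ≤ c K K' for some c > 0. If L satisfies L((m+1,n),(m'+1,n')) = L((m,n),(m',n')) and L((m,n+1),(m',n'+1)) = λ^{m-m'} L((m,n),(m',n')) for all m,n,m',n' ∈ ℤ, then there is a unique bounded operator S : H_K → H_{K'} such that S U_K = U_{K'} S, S V_K = V_{K'} S, and ⟨S U_K^m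 V_K^n ξ₀, U_{K'}^{m'} V_{K'}^{n'} ξ₀'⟩ = L((m,n),(m',n')) for all m,n,m',n' ∈ ℤ; moreover ‖S‖ ≤ √c. Conversely, if S : H_K → H_{K'} is bounded and satisfies S U_K = U_{K'} S and S V_K = V_{K'} S, then there exists a unique L : ℤ² × ℤ² → ℂ with ⟨S U_K^m V_K^n ξ₀, U_{K'}^{m'} V_{K'}^{n'} ξ₀'⟩ = L((m,n),(m',n')) for all m,n,m',n' ∈ ℤ, and L satisfies the two covariance relations above as well as L² ≤ ‖S‖² K K'. -/
open scoped InnerProductSpace ComplexOrder Classical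
open Complex

noncomputable section

/-! The Gram kernels of the two cyclic families are `K` and `K'`, so `L² ≤ c K K'` says that
`(ξ, η) ↦ ∑ L(p, q) ξ_p conj η_q` is a sesquilinear form bounded by `√c` on the dense spans of
the families. Riesz representation and extension by continuity turn such a form into an operator
`S` with `‖S‖ ≤ √c` whose matrix coefficients are `L`; conversely the matrix coefficients of any
`S` satisfy `L² ≤ ‖S‖² K K'` by Cauchy–Schwarz. Since `U` and `V` act on the vectors
`U^m V^n ξ₀` as shifts (`V` up to the phase `λ^(-m)`), the covariance relations of the matrix
coefficients of `S` are exactly the relations `S U = U' S` and `S V = V' S` tested on the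
two dense families. -/

section DenseSpan

variable {H H' : Type*} [NormedAddCommGroup H] [InnerProductSpace ℂ H]
  [NormedAddCommGroup H'] [InnerProductSpace ℂ H'] {ι κ : Type*}

theorem ext_inner_left_of_dense_span {g : ι → H}
    (hg : Dense (Submodule.span ℂ (Set.range g) : Set H)) {w w' : H}
    (h : ∀ q, ⟪g q, w⟫_ℂ = ⟪g q, w'⟫_ℂ) : w = w' := by
  refine hg.eq_of_inner_right ℂ fun v hv => ?_
  induction hv using Submodule.span_induction with
  | mem x hx => obtain ⟨q, rfl⟩ := hx; exact h q
  | zero => simp only [inner_zero_left]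
  | add x y _ _ hx hy => simp only [inner_add_left, hx, hy]
  | smul a x _ hx => simp only [inner_smul_left, hx]

theorem ContinuousLinearMap.ext_inner_of_dense_span {g : ι → H} {g' : κ → H'}
    (hg : Dense (Submodule.span ℂ (Set.range g) : Set H))
    (hg' : Dense (Submodule.span ℂ (Set.range g') : Set H')) {S T : H →L[ℂ] H'}
    (h : ∀ p q, ⟪g' q, S (g p)⟫_ℂ = ⟪g' q, T (g p)⟫_ℂ) : S = T := by
  refine ContinuousLinearMap.ext_on hg ?_
  rintro _ ⟨p, rfl⟩
  exact ext_inner_left_of_dense_span hg' (h p)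

theorem norm_le_of_dense_of_norm_inner_le {s : Set H} (hs : Dense s) {w : H} {M : ℝ}
    (hM : 0 ≤ M) (h : ∀ v ∈ s, ‖⟪v, w⟫_ℂ‖ ≤ M * ‖v‖) : ‖w‖ ≤ M := by
  have hall : ∀ v, ‖⟪v, w⟫_ℂ‖ ≤ M * ‖v‖ :=
    hs.induction h (isClosed_le (by fun_prop) (by fun_prop))
  have hw : ‖w‖ * ‖w‖ ≤ M * ‖w‖ := by
    simpa only [← inner_self_re_eq_norm, inner_self_eq_norm_mul_norm] using hall w
  rcases (norm_nonneg w).eq_or_lt with hw0 | hw0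
  · rwa [← hw0]
  · exact le_of_mul_le_mul_right hw hw0

theorem inner_sum_smul_sum_smul (s : Finset ι) (t : Finset κ) (a : ι → H) (b : κ → H)
    (ξ : ι → ℂ) (η : κ → ℂ) :
    ⟪∑ q ∈ t, η q • b q, ∑ p ∈ s, ξ p • a p⟫_ℂ =
      ∑ p ∈ s, ∑ q ∈ t, ⟪b q, a p⟫_ℂ * ξ p * (starRingEnd ℂ) (η q) := by
  simp only [sum_inner, inner_sum, inner_smul_left, inner_smul_right, Finset.mul_sum]
  exact Finset.sum_congr rfl fun _ _ => Finset.sum_congr rfl fun _ _ => by ring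

theorem denseRange_linearCombination {g : ι → H}
    (hg : Dense (Submodule.span ℂ (Set.range g) : Set H)) :
    DenseRange (Finsupp.linearCombination ℂ g) := by
  rwa [DenseRange, ← LinearMap.coe_range, Finsupp.range_linearCombination]

theorem inner_linearCombination_linearCombination (a : ι → H) (b : κ → H)
    (ξ : ι →₀ ℂ) (η : κ →₀ ℂ) :
    ⟪Finsupp.linearCombination ℂ b η, Finsupp.linearCombination ℂ a ξ⟫_ℂ =
      ∑ p ∈ ξ.support, ∑ q ∈ η.support, ⟪b q, a p⟫_ℂ * ξ p * (starRingEnd ℂ) (η q) :=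
  inner_sum_smul_sum_smul _ _ a b ξ η

variable [CompleteSpace H']

theorem exists_inner_eq_of_norm_le {g' : κ → H'}
    (hg' : Dense (Submodule.span ℂ (Set.range g') : Set H')) (l : κ → ℂ) {M : ℝ}
    (h : ∀ η : κ →₀ ℂ, ‖∑ q ∈ η.support, l q * (starRingEnd ℂ) (η q)‖ ≤
      M * ‖Finsupp.linearCombination ℂ g' η‖) :
    ∃ z : H', ∀ q, ⟪g' q, z⟫_ℂ = l q := by
  set T := Finsupp.linearCombination ℂ fun q => (starRingEnd ℂ) (l q)
  have hT : ∀ η, ‖T η‖ ≤ M * ‖Finsupp.linearCombination ℂ g' η‖ := fun η => by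
    convert h η using 1
    rw [← Complex.norm_conj, Finsupp.linearCombination_apply, Finsupp.sum, map_sum]
    simp only [smul_eq_mul, map_mul, Complex.conj_conj, mul_comm]
  refine ⟨(InnerProductSpace.toDual ℂ H').symm (T.extendOfNorm (Finsupp.linearCombination ℂ g')),
    fun q => ?_⟩
  rw [← inner_conj_symm, InnerProductSpace.toDual_symm_apply,
    ← one_smul ℂ (g' q), ← Finsupp.linearCombination_single,
    LinearMap.extendOfNorm_eq (denseRange_linearCombination hg') ⟨M, hT⟩]
  simp [T]

theorem exists_opNorm_le_apply_eq {g : ι → H}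
    (hg : Dense (Submodule.span ℂ (Set.range g) : Set H)) (ζ : ι → H') {C : ℝ} (hC : 0 ≤ C)
    (h : ∀ ξ : ι →₀ ℂ, ‖Finsupp.linearCombination ℂ ζ ξ‖ ≤
      C * ‖Finsupp.linearCombination ℂ g ξ‖) :
    ∃ S : H →L[ℂ] H', ‖S‖ ≤ C ∧ ∀ p, S (g p) = ζ p := by
  refine ⟨(Finsupp.linearCombination ℂ ζ).extendOfNorm (Finsupp.linearCombination ℂ g),
    LinearMap.opNorm_extendOfNorm_le (denseRange_linearCombination hg) hC h, fun p => ?_⟩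
  rw [← one_smul ℂ (g p), ← Finsupp.linearCombination_single,
    LinearMap.extendOfNorm_eq (denseRange_linearCombination hg) ⟨C, h⟩,
    Finsupp.linearCombination_single, one_smul]

end DenseSpan

theorem KernelSqLE.norm_finset_sum_sq_le {X : Type*} {L K K' : X → X → ℂ} {c : ℝ}
    (h : KernelSqLE L K K' c) (s t : Finset X) (ξ η : X → ℂ) :
    ‖∑ p ∈ s, ∑ q ∈ t, L p q * ξ p * (starRingEnd ℂ) (η q)‖ ^ 2 ≤
      c * (∑ p ∈ s, ∑ p' ∈ s, K p p' * ξ p * (starRingEnd ℂ) (ξ p')).re *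
        (∑ q ∈ t, ∑ q' ∈ t, K' q q' * η q * (starRingEnd ℂ) (η q')).re := by
  have hsum (u : Finset X) (F : X → ℂ) : ∑ p ∈ u, F p = ∑ i, F (u.equivFin.symm i) :=
    (u.sum_coe_sort F).symm.trans (u.equivFin.symm.sum_comp fun p => F p).symm
  simp only [hsum s, hsum t]
  exact h _ _ _ _ _ _

section Kernels

variable {H H' : Type*} [NormedAddCommGroup H] [InnerProductSpace ℂ H]
  [NormedAddCommGroup H'] [InnerProductSpace ℂ H'] {X : Type*}

theorem re_sum_inner_mul_mul_conj (s : Finset X) (g : X → H) (ξ : X → ℂ) :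
    (∑ p ∈ s, ∑ p' ∈ s, ⟪g p', g p⟫_ℂ * ξ p * (starRingEnd ℂ) (ξ p')).re =
      ‖∑ p ∈ s, ξ p • g p‖ ^ 2 := by
  rw [← inner_sum_smul_sum_smul]
  exact inner_self_eq_norm_sq (𝕜 := ℂ) _

theorem kernelSqLE_inner_apply (g : X → H) (g' : X → H') (S : H →L[ℂ] H') :
    KernelSqLE (fun x y => ⟪g' y, S (g x)⟫_ℂ) (fun x y => ⟪g y, g x⟫_ℂ)
      (fun x y => ⟪g' y, g' x⟫_ℂ) (‖S‖ ^ 2) := by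
  intro m n x y ξ η
  set v := ∑ i, ξ i • g (x i)
  set w := ∑ j, η j • g' (y j)
  have hL : ∑ i, ∑ j, ⟪g' (y j), S (g (x i))⟫_ℂ * ξ i * (starRingEnd ℂ) (η j) = ⟪w, S v⟫_ℂ := by
    simp only [v, w, map_sum, map_smul, inner_sum_smul_sum_smul]
  rw [hL, re_sum_inner_mul_mul_conj, re_sum_inner_mul_mul_conj]
  calc ‖⟪w, S v⟫_ℂ‖ ^ 2 ≤ (‖w‖ * (‖S‖ * ‖v‖)) ^ 2 := by
        gcongr
        exact (norm_inner_le_norm _ _).trans (by gcongr; exact S.le_opNorm v)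
    _ = ‖S‖ ^ 2 * ‖v‖ ^ 2 * ‖w‖ ^ 2 := by ring

variable [CompleteSpace H']

theorem exists_inner_apply_eq_of_kernelSqLE {g : X → H} {g' : X → H'}
    (hg : Dense (Submodule.span ℂ (Set.range g) : Set H))
    (hg' : Dense (Submodule.span ℂ (Set.range g') : Set H')) {L : X → X → ℂ} {c : ℝ}
    (hc : 0 ≤ c)
    (hL : KernelSqLE L (fun x y => ⟪g y, g x⟫_ℂ) (fun x y => ⟪g' y, g' x⟫_ℂ) c) :
    ∃ S : H →L[ℂ] H', ‖S‖ ≤ Real.sqrt c ∧ ∀ x y, ⟪g' y, S (g x)⟫_ℂ = L x y := by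
  set ℓ := Finsupp.linearCombination ℂ g
  set ℓ' := Finsupp.linearCombination ℂ g'
  have hform (ξ η : X →₀ ℂ) :
      ‖∑ p ∈ ξ.support, ∑ q ∈ η.support, L p q * ξ p * (starRingEnd ℂ) (η q)‖ ≤
        Real.sqrt c * ‖ℓ ξ‖ * ‖ℓ' η‖ := by
    have h := hL.norm_finset_sum_sq_le ξ.support η.support ξ η
    rw [re_sum_inner_mul_mul_conj, re_sum_inner_mul_mul_conj] at h
    refine le_of_pow_le_pow_left₀ two_ne_zero (by positivity) ?_
    rwa [mul_pow, mul_pow, Real.sq_sqrt hc]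
  have hζ (x : X) : ∃ z : H', ∀ y, ⟪g' y, z⟫_ℂ = L x y := by
    refine exists_inner_eq_of_norm_le hg' (L x) (M := Real.sqrt c * ‖g x‖) fun η => ?_
    simpa [ℓ] using hform (Finsupp.single x 1) η
  choose ζ hζ using hζ
  obtain ⟨S, hS, hSg⟩ := exists_opNorm_le_apply_eq hg ζ (Real.sqrt_nonneg c) fun ξ => by
    refine norm_le_of_dense_of_norm_inner_le (denseRange_linearCombination hg')
      (by positivity) ?_
    rintro _ ⟨η, rfl⟩
    rw [inner_linearCombination_linearCombination]
    simpa only [hζ] using hform ξ η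
  exact ⟨S, hS, fun x y => by rw [hSg, hζ]⟩

end Kernels

theorem Units.mul_zpow_eq_smul {𝕜 A : Type*} [Field 𝕜] [Ring A] [Algebra 𝕜 A] {u : Aˣ} {v : A}
    {c : 𝕜} (hc : c ≠ 0) (h : v * u = c • (u * v)) (m : ℤ) :
    v * ↑(u ^ m) = c ^ m • (↑(u ^ m) * v) := by
  set c' : Aˣ := Units.map (algebraMap 𝕜 A : 𝕜 →* A) (Units.mk0 c hc)
  have hc' : ((c' ^ m : Aˣ) : A) = algebraMap 𝕜 A (c ^ m) := by
    rw [← map_zpow, Units.coe_map, Units.val_zpow_eq_zpow_val, Units.val_mk0]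
    rfl
  have hsemi : SemiconjBy v ↑u ↑(c' * u) := by
    simp [SemiconjBy, c', h, Algebra.smul_def, mul_assoc]
  have hcomm : Commute c' u := Units.ext (Algebra.commutes c (u : A))
  rw [(hsemi.units_zpow_right m).eq, hcomm.mul_zpow, Units.val_mul, hc', mul_assoc,
    ← Algebra.smul_def]

section Gabor

variable {H : Type*} [NormedAddCommGroup H] [InnerProductSpace ℂ H] [CompleteSpace H]
  (U V : unitary (H →L[ℂ] H)) (ξ₀ : H)

theorem gaborVec_U (p : ℤ × ℤ) :
    (U : H →L[ℂ] H) (gaborVec U V ξ₀ p) = gaborVec U V ξ₀ (p.1 + 1, p.2) := by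
  rw [gaborVec, gaborVec, add_comm, zpow_one_add]
  rfl

theorem gaborVec_V {lam : ℂ} (hlam : lam ≠ 0)
    (hUV : (U : H →L[ℂ] H) * (V : H →L[ℂ] H) = lam • ((V : H →L[ℂ] H) * (U : H →L[ℂ] H)))
    (p : ℤ × ℤ) :
    (V : H →L[ℂ] H) (gaborVec U V ξ₀ p) = lam ^ (-p.1) • gaborVec U V ξ₀ (p.1, p.2 + 1) := by
  -- `U ^ p.1` is a power in the unit group, where `V U = λ⁻¹ U V` can be iterated.
  have hVU : (V : H →L[ℂ] H) * ↑(Unitary.toUnits U) =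
      lam⁻¹ • (↑(Unitary.toUnits U) * (V : H →L[ℂ] H)) := by
    simp [hUV, smul_smul, inv_mul_cancel₀ hlam]
  have key := Units.mul_zpow_eq_smul (inv_ne_zero hlam) hVU p.1
  rw [← map_zpow, Unitary.val_toUnits_apply, inv_zpow'] at key
  rw [gaborVec, gaborVec, add_comm p.2, zpow_one_add]
  change ((V : H →L[ℂ] H) * ((U ^ p.1 : unitary (H →L[ℂ] H)) : H →L[ℂ] H))
    (((V ^ p.2 : unitary (H →L[ℂ] H)) : H →L[ℂ] H) ξ₀) = _
  rw [key]
  rfl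

end Gabor

section Intertwining

variable {H H' : Type*} [NormedAddCommGroup H] [InnerProductSpace ℂ H]
  [NormedAddCommGroup H'] [InnerProductSpace ℂ H'] [CompleteSpace H']

theorem intertwines_iff_inner {ι κ : Type*} {g : ι → H} {g' : κ → H'}
    (hg : Dense (Submodule.span ℂ (Set.range g) : Set H))
    (hg' : Dense (Submodule.span ℂ (Set.range g') : Set H')) (S : H →L[ℂ] H') (A : H →L[ℂ] H)
    (A' : unitary (H' →L[ℂ] H')) :
    S.comp A = (A' : H' →L[ℂ] H').comp S ↔
      ∀ p q, ⟪(A' : H' →L[ℂ] H') (g' q), S (A (g p))⟫_ℂ = ⟪g' q, S (g p)⟫_ℂ := by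
  constructor
  · intro h p q
    rw [← S.comp_apply A, h, ContinuousLinearMap.comp_apply, Unitary.inner_map_map]
  · intro h
    have hstar : (star (A' : H' →L[ℂ] H')).comp (S.comp A) = S :=
      ContinuousLinearMap.ext_inner_of_dense_span hg hg' fun p q => by
        rw [ContinuousLinearMap.comp_apply, ContinuousLinearMap.star_eq_adjoint,
          ContinuousLinearMap.adjoint_inner_right]
        exact h p q
    calc S.comp A = ((A' : H' →L[ℂ] H') * star (A' : H' →L[ℂ] H')).comp (S.comp A) := by
          rw [Unitary.mul_star_self_of_mem A'.prop]; rfl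
      _ = (A' : H' →L[ℂ] H').comp S := by
          rw [ContinuousLinearMap.mul_def, ContinuousLinearMap.comp_assoc, hstar]

variable [CompleteSpace H]

theorem gaborCovariant_inner_iff {lam : ℂ} (hlam : ‖lam‖ = 1) {U V : unitary (H →L[ℂ] H)}
    {ξ₀ : H} {U' V' : unitary (H' →L[ℂ] H')} {ξ₀' : H'}
    (hUV : (U : H →L[ℂ] H) * (V : H →L[ℂ] H) = lam • ((V : H →L[ℂ] H) * (U : H →L[ℂ] H)))
    (hUV' : (U' : H' →L[ℂ] H') * (V' : H' →L[ℂ] H') =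
      lam • ((V' : H' →L[ℂ] H') * (U' : H' →L[ℂ] H')))
    (hg : Dense (Submodule.span ℂ (Set.range (gaborVec U V ξ₀)) : Set H))
    (hg' : Dense (Submodule.span ℂ (Set.range (gaborVec U' V' ξ₀')) : Set H'))
    (S : H →L[ℂ] H') :
    GaborCovariant lam (fun p q => ⟪gaborVec U' V' ξ₀' q, S (gaborVec U V ξ₀ p)⟫_ℂ) ↔
      S.comp (U : H →L[ℂ] H) = (U' : H' →L[ℂ] H').comp S ∧
        S.comp (V : H →L[ℂ] H) = (V' : H' →L[ℂ] H').comp S := by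
  have hlam0 : lam ≠ 0 := norm_ne_zero_iff.mp (hlam ▸ one_ne_zero)
  rw [intertwines_iff_inner hg hg', intertwines_iff_inner hg hg', GaborCovariant]
  simp only [gaborVec_U, gaborVec_V _ _ _ hlam0 hUV, gaborVec_V _ _ _ hlam0 hUV', map_smul,
    inner_smul_left, inner_smul_right, Prod.forall]
  refine and_congr Iff.rfl (forall₄_congr fun m n m' n' => ?_)
  have hshift : lam ^ (m - m') = (lam ^ (-m + m'))⁻¹ := by
    rw [← zpow_neg, neg_add, neg_neg, sub_eq_neg_add, add_comm]
  rw [map_zpow₀, ← RCLike.inv_eq_conj hlam, inv_zpow', neg_neg, ← mul_assoc, ← zpow_add₀ hlam0,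
    hshift]
  exact eq_inv_mul_iff_mul_eq₀ (zpow_ne_zero _ hlam0)

end Intertwining

theorem IsGaborSystem.kernel_eq {H : Type*} [NormedAddCommGroup H] [InnerProductSpace ℂ H]
    [CompleteSpace H] {lam : ℂ} {K : ℤ × ℤ → ℤ × ℤ → ℂ} {U V : unitary (H →L[ℂ] H)} {ξ₀ : H}
    (h : IsGaborSystem lam K U V ξ₀) :
    K = fun p q => ⟪gaborVec U V ξ₀ q, gaborVec U V ξ₀ p⟫_ℂ :=
  funext₂ fun p q => (h.2.2 p.1 p.2 q.1 q.2).symm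

theorem gabor_intertwiner_general (lam : ℂ) (hlam : ‖lam‖ = 1)
    (K K' : ℤ × ℤ → ℤ × ℤ → ℂ)
    {H : Type*} [NormedAddCommGroup H] [InnerProductSpace ℂ H] [CompleteSpace H]
    {H' : Type*} [NormedAddCommGroup H'] [InnerProductSpace ℂ H'] [CompleteSpace H']
    (U V : unitary (H →L[ℂ] H)) (ξ₀ : H) (U' V' : unitary (H' →L[ℂ] H')) (ξ₀' : H')
    (hsys : IsGaborSystem lam K U V ξ₀) (hsys' : IsGaborSystem lam K' U' V' ξ₀') :
    (∀ (L : ℤ × ℤ → ℤ × ℤ → ℂ) (c : ℝ), 0 < c → KernelSqLE L K K' c →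
      GaborCovariant lam L →
      (∃! S : H →L[ℂ] H',
        S.comp (U : H →L[ℂ] H) = (U' : H' →L[ℂ] H').comp S ∧
        S.comp (V : H →L[ℂ] H) = (V' : H' →L[ℂ] H').comp S ∧
        ∀ m n m' n' : ℤ,
          ⟪gaborVec U' V' ξ₀' (m', n'), S (gaborVec U V ξ₀ (m, n))⟫_ℂ = L (m, n) (m', n')) ∧
      (∀ S : H →L[ℂ] H',
        (S.comp (U : H →L[ℂ] H) = (U' : H' →L[ℂ] H').comp S ∧
         S.comp (V : H →L[ℂ] H) = (V' : H' →L[ℂ] H').comp S ∧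
         ∀ m n m' n' : ℤ,
           ⟪gaborVec U' V' ξ₀' (m', n'), S (gaborVec U V ξ₀ (m, n))⟫_ℂ = L (m, n) (m', n')) →
        ‖S‖ ≤ Real.sqrt c)) ∧
    (∀ S : H →L[ℂ] H',
      S.comp (U : H →L[ℂ] H) = (U' : H' →L[ℂ] H').comp S →
      S.comp (V : H →L[ℂ] H) = (V' : H' →L[ℂ] H').comp S →
      (∃! L : ℤ × ℤ → ℤ × ℤ → ℂ, ∀ m n m' n' : ℤ,
        ⟪gaborVec U' V' ξ₀' (m', n'), S (gaborVec U V ξ₀ (m, n))⟫_ℂ = L (m, n) (m', n')) ∧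
      (∀ L : ℤ × ℤ → ℤ × ℤ → ℂ,
        (∀ m n m' n' : ℤ,
          ⟪gaborVec U' V' ξ₀' (m', n'), S (gaborVec U V ξ₀ (m, n))⟫_ℂ = L (m, n) (m', n')) →
        GaborCovariant lam L ∧ KernelSqLE L K K' (‖S‖ ^ 2))) := by
  obtain rfl := hsys.kernel_eq
  obtain rfl := hsys'.kernel_eq
  obtain ⟨hUV, hg, -⟩ := hsys
  obtain ⟨hUV', hg', -⟩ := hsys'
  have hcov := gaborCovariant_inner_iff hlam hUV hUV' hg hg'
  refine ⟨fun L c hc hL hLcov => ?_, fun S hU hV => ?_⟩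
  · obtain ⟨S, hS, hSL⟩ := exists_inner_apply_eq_of_kernelSqLE hg hg' hc.le hL
    obtain rfl : L = fun p q => ⟪gaborVec U' V' ξ₀' q, S (gaborVec U V ξ₀ p)⟫_ℂ :=
      (funext₂ hSL).symm
    obtain ⟨hSU, hSV⟩ := (hcov S).1 hLcov
    have huniq (T : H →L[ℂ] H')
        (hT : ∀ m n m' n' : ℤ, ⟪gaborVec U' V' ξ₀' (m', n'), T (gaborVec U V ξ₀ (m, n))⟫_ℂ =
          ⟪gaborVec U' V' ξ₀' (m', n'), S (gaborVec U V ξ₀ (m, n))⟫_ℂ) : T = S :=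
      ContinuousLinearMap.ext_inner_of_dense_span hg hg' fun p q => hT p.1 p.2 q.1 q.2
    exact ⟨⟨S, ⟨hSU, hSV, fun _ _ _ _ => rfl⟩, fun T hT => huniq T hT.2.2⟩,
      fun T hT => huniq T hT.2.2 ▸ hS⟩
  · refine ⟨⟨_, fun _ _ _ _ => rfl, fun L hL => funext₂ fun p q => (hL p.1 p.2 q.1 q.2).symm⟩,
      fun L hL => ?_⟩
    obtain rfl : L = fun p q => ⟪gaborVec U' V' ξ₀' q, S (gaborVec U V ξ₀ p)⟫_ℂ :=
      funext₂ fun p q => (hL p.1 p.2 q.1 q.2).symm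
    exact ⟨(hcov S).2 ⟨hU, hV⟩, kernelSqLE_inner_apply _ _ S⟩

/-- Intertwining operators between the Gabor type cyclic systems associated to two
covariant positive definite kernels on `ℤ²` correspond to covariant bikernels `L` with
`L² ≤ c K K'`. -/
theorem gabor_intertwiner (lam : ℂ) (hlam : ‖lam‖ = 1)
    (K K' : ℤ × ℤ → ℤ × ℤ → ℂ) (hK : IsPosDefKernel K) (hK' : IsPosDefKernel K')
    (hKcov : GaborCovariant lam K) (hK'cov : GaborCovariant lam K')
    {H : Type*} [NormedAddCommGroup H] [InnerProductSpace ℂ H] [CompleteSpace H]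
    {H' : Type*} [NormedAddCommGroup H'] [InnerProductSpace ℂ H'] [CompleteSpace H']
    (U V : unitary (H →L[ℂ] H)) (ξ₀ : H) (U' V' : unitary (H' →L[ℂ] H')) (ξ₀' : H')
    (hsys : IsGaborSystem lam K U V ξ₀) (hsys' : IsGaborSystem lam K' U' V' ξ₀') :
    (∀ (L : ℤ × ℤ → ℤ × ℤ → ℂ) (c : ℝ), 0 < c → KernelSqLE L K K' c →
      GaborCovariant lam L →
      (∃! S : H →L[ℂ] H',
        S.comp (U : H →L[ℂ] H) = (U' : H' →L[ℂ] H').comp S ∧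
        S.comp (V : H →L[ℂ] H) = (V' : H' →L[ℂ] H').comp S ∧
        ∀ m n m' n' : ℤ,
          ⟪gaborVec U' V' ξ₀' (m', n'), S (gaborVec U V ξ₀ (m, n))⟫_ℂ = L (m, n) (m', n')) ∧
      (∀ S : H →L[ℂ] H',
        (S.comp (U : H →L[ℂ] H) = (U' : H' →L[ℂ] H').comp S ∧
         S.comp (V : H →L[ℂ] H) = (V' : H' →L[ℂ] H').comp S ∧
         ∀ m n m' n' : ℤ,
           ⟪gaborVec U' V' ξ₀' (m', n'), S (gaborVec U V ξ₀ (m, n))⟫_ℂ = L (m, n) (m', n')) →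
        ‖S‖ ≤ Real.sqrt c)) ∧
    (∀ S : H →L[ℂ] H',
      S.comp (U : H →L[ℂ] H) = (U' : H' →L[ℂ] H').comp S →
      S.comp (V : H →L[ℂ] H) = (V' : H' →L[ℂ] H').comp S →
      (∃! L : ℤ × ℤ → ℤ × ℤ → ℂ, ∀ m n m' n' : ℤ,
        ⟪gaborVec U' V' ξ₀' (m', n'), S (gaborVec U V ξ₀ (m, n))⟫_ℂ = L (m, n) (m', n')) ∧
      (∀ L : ℤ × ℤ → ℤ × ℤ → ℂ,
        (∀ m n m' n' : ℤ,
          ⟪gaborVec U' V' ξ₀' (m', n'), S (gaborVec U V ξ₀ (m, n))⟫_ℂ = L (m, n) (m', n')) →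
        GaborCovariant lam L ∧ KernelSqLE L K K' (‖S‖ ^ 2))) :=
  gabor_intertwiner_general lam hlam K K' U V ξ₀ U' V' ξ₀' hsys hsys'
end
end
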